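/- Let A₁=(0,0,0) and A₂=(a,b,c) ∈ ℝ³ with A₂ ≠ A₁. The translation-like Thaloid of the translation segment A₁A₂ (the set of P ∉ {A₁,A₂} where the Euclidean angle between t₁ and t₂ is π/2) equals S ∖ {A₁,A₂} for some Nil translation sphere S (with some center Q ∈ ℝ³ and some radius ρ > 0) if and only if a = 0 and b = 0; and in that case the sphere is the Nil translation sphere with center F = (0,0,c/2) and radius |c|/2. -/
import Mathlib


noncomputable section

open Real

/-- Euclidean dot product on ℝ³. -/
def dot3 (u v : ℝ × ℝ × ℝ) : ℝ := u.1 * v.1 + u.2.1 * v.2.1 + u.2.2 * v.2.2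

/-- Euclidean norm on ℝ³. -/
def norm3 (u : ℝ × ℝ × ℝ) : ℝ := Real.sqrt (dot3 u u)

/-- The Euclidean angle between two vectors of ℝ³. -/
def angle3 (u v : ℝ × ℝ × ℝ) : ℝ :=
  Real.arccos (dot3 u v / (norm3 u * norm3 v))

/-- The Nil translation by `v = (X,Y,Z)`: `(a,b,c) ↦ (a+X, b+Y, c+bX+Z)`. -/
def nilTranslate (v p : ℝ × ℝ × ℝ) : ℝ × ℝ × ℝ :=
  (p.1 + v.1, p.2.1 + v.2.1, p.2.2 + p.2.1 * v.1 + v.2.2)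

/-- The Nil translation sphere with center `Q` and radius `ρ`: the image under the Nil
translation `L_Q` of `{(x,y,z) : x² + y² + (z - xy/2)² = ρ²}`. -/
def nilSphere (Q : ℝ × ℝ × ℝ) (ρ : ℝ) : Set (ℝ × ℝ × ℝ) :=
  nilTranslate Q '' {p : ℝ × ℝ × ℝ | p.1 ^ 2 + p.2.1 ^ 2 + (p.2.2 - p.1 * p.2.1 / 2) ^ 2 = ρ ^ 2}

/-- The translation-like Thaloid of the translation segment from `A₁ = (0,0,0)` to
`A₂ = (a,b,c)`: the set of points `P ∉ {A₁, A₂}` at which the Euclidean angle between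
the tangent vectors `t₁`, `t₂` is `π/2`. -/
def nilThaloid (a b c : ℝ) : Set (ℝ × ℝ × ℝ) :=
  {P : ℝ × ℝ × ℝ | P ≠ (0, 0, 0) ∧ P ≠ (a, b, c) ∧
    angle3 (-P.1, -P.2.1, P.1 * P.2.1 / 2 - P.2.2)
      (a - P.1, b - P.2.1, c - P.2.2 + (P.1 + a) * (P.2.1 - b) / 2) = π / 2}

lemma dot3_mk (u1 u2 u3 v1 v2 v3 : ℝ) :
    dot3 (u1, u2, u3) (v1, v2, v3) = u1 * v1 + u2 * v2 + u3 * v3 := rfl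

lemma angle3_eq_pi_div_two_iff {u v : ℝ × ℝ × ℝ} (hu : dot3 u u ≠ 0) (hv : dot3 v v ≠ 0) :
    angle3 u v = π / 2 ↔ dot3 u v = 0 := by
  have hu0 : 0 ≤ dot3 u u := by
    unfold dot3
    nlinarith [mul_self_nonneg u.1, mul_self_nonneg u.2.1, mul_self_nonneg u.2.2]
  have hv0 : 0 ≤ dot3 v v := by
    unfold dot3
    nlinarith [mul_self_nonneg v.1, mul_self_nonneg v.2.1, mul_self_nonneg v.2.2]
  have h1 : norm3 u ≠ 0 := by
    unfold norm3; rw [Real.sqrt_ne_zero']; exact lt_of_le_of_ne hu0 (Ne.symm hu)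
  have h2 : norm3 v ≠ 0 := by
    unfold norm3; rw [Real.sqrt_ne_zero']; exact lt_of_le_of_ne hv0 (Ne.symm hv)
  unfold angle3
  rw [Real.arccos_eq_pi_div_two, div_eq_zero_iff]
  constructor
  · rintro (h | h)
    · exact h
    · exact absurd h (mul_ne_zero h1 h2)
  · exact Or.inl

lemma t1_ne {x y z : ℝ} (h : (x, y, z) ≠ ((0 : ℝ), (0 : ℝ), (0 : ℝ))) :
    dot3 (-x, -y, x * y / 2 - z) (-x, -y, x * y / 2 - z) ≠ 0 := by
  intro h0
  have h0' : (-x) * (-x) + (-y) * (-y) + (x * y / 2 - z) * (x * y / 2 - z) = 0 := h0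
  have hx : x = 0 := by
    have hx2 : x ^ 2 = 0 :=
      le_antisymm (by nlinarith [mul_self_nonneg y, mul_self_nonneg (x * y / 2 - z)])
        (sq_nonneg x)
    exact sq_eq_zero_iff.mp hx2
  subst hx
  have hy : y = 0 := by
    have hy2 : y ^ 2 = 0 :=
      le_antisymm (by nlinarith [mul_self_nonneg (0 * y / 2 - z)]) (sq_nonneg y)
    exact sq_eq_zero_iff.mp hy2
  subst hy
  have hz : z = 0 := by
    have hz2 : z ^ 2 = 0 := by linear_combination h0'
    exact sq_eq_zero_iff.mp hz2
  exact h (by rw [hz])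

lemma t2_ne {a b c x y z : ℝ} (h : (x, y, z) ≠ (a, b, c)) :
    dot3 (a - x, b - y, c - z + (x + a) * (y - b) / 2)
      (a - x, b - y, c - z + (x + a) * (y - b) / 2) ≠ 0 := by
  intro h0
  have h0' : (a - x) * (a - x) + (b - y) * (b - y) +
      (c - z + (x + a) * (y - b) / 2) * (c - z + (x + a) * (y - b) / 2) = 0 := h0
  have hx : x = a := by
    have hx2 : (a - x) ^ 2 = 0 :=
      le_antisymm (by nlinarith [mul_self_nonneg (b - y),
        mul_self_nonneg (c - z + (x + a) * (y - b) / 2)]) (sq_nonneg _)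
    have := sq_eq_zero_iff.mp hx2; linarith
  subst hx
  have hy : y = b := by
    have hy2 : (b - y) ^ 2 = 0 :=
      le_antisymm (by nlinarith [mul_self_nonneg (c - z + (x + x) * (y - b) / 2)]) (sq_nonneg _)
    have := sq_eq_zero_iff.mp hy2; linarith
  subst hy
  have hz : z = c := by
    have hz2 : (c - z) ^ 2 = 0 := by linear_combination h0'
    have := sq_eq_zero_iff.mp hz2; linarith
  exact h (by rw [hz])

lemma mem_thaloid_iff {a b c x y z : ℝ} :
    (x, y, z) ∈ nilThaloid a b c ↔
      ((x, y, z) ≠ ((0 : ℝ), (0 : ℝ), (0 : ℝ)) ∧ (x, y, z) ≠ (a, b, c) ∧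
        dot3 (-x, -y, x * y / 2 - z) (a - x, b - y, c - z + (x + a) * (y - b) / 2) = 0) := by
  constructor
  · rintro ⟨h1, h2, h3⟩
    exact ⟨h1, h2, (angle3_eq_pi_div_two_iff (t1_ne h1) (t2_ne h2)).1 h3⟩
  · rintro ⟨h1, h2, h3⟩
    exact ⟨h1, h2, (angle3_eq_pi_div_two_iff (t1_ne h1) (t2_ne h2)).2 h3⟩

lemma mem_nilSphere_iff {X Y Z ρ x y z : ℝ} :
    (x, y, z) ∈ nilSphere (X, Y, Z) ρ ↔
      (x - X) ^ 2 + (y - Y) ^ 2 + ((z - (y - Y) * X - Z) - (x - X) * (y - Y) / 2) ^ 2 = ρ ^ 2 := by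
  constructor
  · rintro ⟨⟨p1, p2, p3⟩, hp, htr⟩
    have hp' : p1 ^ 2 + p2 ^ 2 + (p3 - p1 * p2 / 2) ^ 2 = ρ ^ 2 := hp
    have h1 : p1 + X = x := congrArg Prod.fst htr
    have h2 : p2 + Y = y := congrArg (fun p => p.2.1) htr
    have h3 : p3 + p2 * X + Z = z := congrArg (fun p => p.2.2) htr
    subst h1; subst h2; subst h3
    linear_combination hp'
  · intro h
    refine ⟨(x - X, y - Y, z - (y - Y) * X - Z), ?_, ?_⟩
    · show (x - X) ^ 2 + (y - Y) ^ 2 + ((z - (y - Y) * X - Z) - (x - X) * (y - Y) / 2) ^ 2 = ρ ^ 2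
      linear_combination h
    · show ((x - X) + X, (y - Y) + Y, (z - (y - Y) * X - Z) + (y - Y) * X + Z) = (x, y, z)
      simp only [Prod.mk.injEq]
      refine ⟨by ring, by ring, by ring⟩

lemma thaloid_eq_sphere {c : ℝ} (hc : c ≠ 0) :
    nilThaloid 0 0 c =
      nilSphere (0, 0, c / 2) (|c| / 2) \ {((0 : ℝ), (0 : ℝ), (0 : ℝ)), ((0 : ℝ), (0 : ℝ), c)} := by
  ext ⟨x, y, z⟩
  rw [Set.mem_diff, mem_thaloid_iff, mem_nilSphere_iff]
  simp only [Set.mem_insert_iff, Set.mem_singleton_iff, not_or]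
  have habs : (|c| / 2) ^ 2 = (c / 2) ^ 2 := by rw [div_pow, div_pow, sq_abs]
  constructor
  · rintro ⟨h1, h2, h3⟩
    refine ⟨?_, h1, h2⟩
    rw [habs]
    rw [dot3_mk] at h3
    linear_combination h3
  · rintro ⟨hs, h1, h2⟩
    refine ⟨h1, h2, ?_⟩
    rw [habs] at hs
    rw [dot3_mk]
    linear_combination hs

/-- The translation-like Thaloid of the translation segment from `(0,0,0)` to `(a,b,c)` is
a Nil translation sphere minus the two endpoints if and only if `a = b = 0`; in that case
the sphere has center `(0,0,c/2)` and radius `|c|/2`. -/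
theorem nil_thaloid_is_sphere_iff (a b c : ℝ)
    (hA : (a, b, c) ≠ ((0 : ℝ), (0 : ℝ), (0 : ℝ))) :
    ((∃ Q : ℝ × ℝ × ℝ, ∃ ρ : ℝ, 0 < ρ ∧
        nilThaloid a b c = nilSphere Q ρ \ {((0 : ℝ), (0 : ℝ), (0 : ℝ)), (a, b, c)}) ↔
      (a = 0 ∧ b = 0)) ∧
    (a = 0 ∧ b = 0 →
      nilThaloid a b c =
        nilSphere (0, 0, c / 2) (|c| / 2) \ {((0 : ℝ), (0 : ℝ), (0 : ℝ)), (a, b, c)}) := by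
  constructor
  · constructor
    · rintro ⟨⟨X, Y, Z⟩, ρ, hρ, hEq⟩
      by_contra hn
      have hor : a ≠ 0 ∨ b ≠ 0 := by
        by_contra h; push_neg at h; exact hn ⟨h.1, h.2⟩
      have hab2 : a ^ 2 + b ^ 2 ≠ 0 := by
        rcases hor with h | h
        · intro h0
          exact h (sq_eq_zero_iff.mp (le_antisymm (by linarith [sq_nonneg b]) (sq_nonneg a)))
        · intro h0
          exact h (sq_eq_zero_iff.mp (le_antisymm (by linarith [sq_nonneg a]) (sq_nonneg b)))
      have hcurve : ∀ t : ℝ, t ∉ ({-a / b, 0, b / a} : Set ℝ) →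
          (a - 2 * X) * (a + b * t) * (1 + t ^ 2)
            + (b - 2 * Y) * t * (a + b * t) * (1 + t ^ 2)
            + (X ^ 2 + Y ^ 2 - ρ ^ 2) * (1 + t ^ 2) ^ 2
            + ((a * Y + X * Y - 2 * Z) / 2 + ((b * Y - a * X) / 2) * t
                + ((X * Y - b * X - 2 * Z) / 2) * t ^ 2) ^ 2 = 0 := by
        intro t ht
        simp only [Set.mem_insert_iff, Set.mem_singleton_iff, not_or] at ht
        obtain ⟨ht1, ht2, ht3⟩ := ht
        have hD : (1 : ℝ) + t ^ 2 ≠ 0 := by positivity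
        have hPmem : ((a + b * t) / (1 + t ^ 2), t * (a + b * t) / (1 + t ^ 2),
            ((a + b * t) / (1 + t ^ 2)) * (t * (a + b * t) / (1 + t ^ 2)) / 2)
              ∈ nilThaloid a b c := by
          rw [mem_thaloid_iff]
          refine ⟨?_, ?_, ?_⟩
          · intro hP
            rw [Prod.mk.injEq, Prod.mk.injEq] at hP
            have h1 : a + b * t = 0 := (div_eq_zero_iff.1 hP.1).resolve_right hD
            rcases eq_or_ne b 0 with hb | hb
            · have ha : a ≠ 0 := hor.resolve_right (not_not.2 hb)
              rw [hb] at h1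
              exact ha (by linarith)
            · exact ht1 (by rw [eq_div_iff hb]; linarith)
          · intro hP
            rw [Prod.mk.injEq, Prod.mk.injEq] at hP
            obtain ⟨h1', h2', -⟩ := hP
            rw [div_eq_iff hD] at h1' h2'
            have h4 : (a * t - b) * (1 + t ^ 2) = 0 := by linear_combination h2' - t * h1'
            have h5 : a * t = b := sub_eq_zero.1 ((mul_eq_zero.1 h4).resolve_right hD)
            rcases eq_or_ne a 0 with ha | ha
            · have hb : b ≠ 0 := hor.resolve_left (not_not.2 ha)
              rw [ha] at h5
              exact hb (by linarith)
            · exact ht3 (by rw [eq_div_iff ha]; linarith)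
          · rw [dot3_mk]
            field_simp
            ring
        rw [hEq] at hPmem
        have hsph := hPmem.1
        rw [mem_nilSphere_iff] at hsph
        have hgoal : (a - 2 * X) * (a + b * t) * (1 + t ^ 2)
            + (b - 2 * Y) * t * (a + b * t) * (1 + t ^ 2)
            + (X ^ 2 + Y ^ 2 - ρ ^ 2) * (1 + t ^ 2) ^ 2
            + ((a * Y + X * Y - 2 * Z) / 2 + ((b * Y - a * X) / 2) * t
                + ((X * Y - b * X - 2 * Z) / 2) * t ^ 2) ^ 2
            = (1 + t ^ 2) ^ 2 *
              (((a + b * t) / (1 + t ^ 2) - X) ^ 2 + (t * (a + b * t) / (1 + t ^ 2) - Y) ^ 2 +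
                ((((a + b * t) / (1 + t ^ 2)) * (t * (a + b * t) / (1 + t ^ 2)) / 2 -
                      (t * (a + b * t) / (1 + t ^ 2) - Y) * X - Z) -
                    ((a + b * t) / (1 + t ^ 2) - X) * (t * (a + b * t) / (1 + t ^ 2) - Y) / 2) ^ 2
                - ρ ^ 2) := by
          field_simp
          ring
        rw [hgoal, hsph, sub_self, mul_zero]
      have hSfin : Set.Finite ({-a / b, 0, b / a} : Set ℝ) := Set.toFinite _
      have hdense : Dense (({-a / b, 0, b / a} : Set ℝ)ᶜ) := hSfin.countable.dense_compl ℝ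
      have hcont : Continuous (fun t : ℝ => (a - 2 * X) * (a + b * t) * (1 + t ^ 2)
          + (b - 2 * Y) * t * (a + b * t) * (1 + t ^ 2)
          + (X ^ 2 + Y ^ 2 - ρ ^ 2) * (1 + t ^ 2) ^ 2
          + ((a * Y + X * Y - 2 * Z) / 2 + ((b * Y - a * X) / 2) * t
              + ((X * Y - b * X - 2 * Z) / 2) * t ^ 2) ^ 2) := by fun_prop
      have hfun := Continuous.ext_on hdense hcont continuous_const
        (fun t ht => hcurve t ht)
      have key : ∀ t : ℝ, (a - 2 * X) * (a + b * t) * (1 + t ^ 2)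
          + (b - 2 * Y) * t * (a + b * t) * (1 + t ^ 2)
          + (X ^ 2 + Y ^ 2 - ρ ^ 2) * (1 + t ^ 2) ^ 2
          + ((a * Y + X * Y - 2 * Z) / 2 + ((b * Y - a * X) / 2) * t
              + ((X * Y - b * X - 2 * Z) / 2) * t ^ 2) ^ 2 = 0 :=
        fun t => congrFun hfun t
      have k0 := key 0
      have k1 := key 1
      have km1 := key (-1)
      have k2 := key 2
      have km2 := key (-2)
      have hpq : (a * Y + b * X) * (b * Y - a * X) = 0 := by
        linear_combination (5/3 : ℝ) * k1 - (5/3 : ℝ) * km1 - (1/3 : ℝ) * k2 + (1/3 : ℝ) * km2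
      have hsq : (a * Y + b * X) ^ 2 = (b * Y - a * X) ^ 2 := by
        linear_combination (10 : ℝ) * k0 - (10/3 : ℝ) * k1 - (10/3 : ℝ) * km1
          + (1/3 : ℝ) * k2 + (1/3 : ℝ) * km2
      have hp4 : (a * Y + b * X) ^ 4 = 0 := by
        linear_combination ((a * Y + b * X) * (b * Y - a * X)) * hpq + (a * Y + b * X) ^ 2 * hsq
      have hp : a * Y + b * X = 0 := (pow_eq_zero_iff (by norm_num : (4 : ℕ) ≠ 0)).mp hp4
      have hq4 : (b * Y - a * X) ^ 4 = 0 := by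
        linear_combination ((a * Y + b * X) * (b * Y - a * X)) * hpq - (b * Y - a * X) ^ 2 * hsq
      have hq : b * Y - a * X = 0 := (pow_eq_zero_iff (by norm_num : (4 : ℕ) ≠ 0)).mp hq4
      have hY : Y = 0 := by
        have h : (a ^ 2 + b ^ 2) * Y = 0 := by linear_combination a * hp + b * hq
        exact (mul_eq_zero.1 h).resolve_left hab2
      have hX : X = 0 := by
        have h : (a ^ 2 + b ^ 2) * X = 0 := by linear_combination b * hp - a * hq
        exact (mul_eq_zero.1 h).resolve_left hab2
      subst hX; subst hY
      have hab' : a * b = 0 := by linear_combination (1/8 : ℝ) * k1 - (1/8 : ℝ) * km1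
      have haa : a ^ 2 = b ^ 2 := by
        linear_combination (2 : ℝ) * k0 - (1/4 : ℝ) * k1 - (1/4 : ℝ) * km1
      have ha4 : a ^ 4 = 0 := by linear_combination a ^ 2 * haa + a * b * hab'
      have ha : a = 0 := (pow_eq_zero_iff (by norm_num : (4 : ℕ) ≠ 0)).mp ha4
      have hb : b = 0 := by
        have hb2 : b ^ 2 = 0 := by linear_combination a * ha - haa
        exact sq_eq_zero_iff.mp hb2
      exact hn ⟨ha, hb⟩
    · rintro ⟨ha, hb⟩
      subst ha; subst hb
      have hc : c ≠ 0 := fun h => hA (by rw [h])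
      exact ⟨(0, 0, c / 2), |c| / 2, div_pos (abs_pos.2 hc) two_pos, thaloid_eq_sphere hc⟩
  · rintro ⟨ha, hb⟩
    subst ha; subst hb
    have hc : c ≠ 0 := fun h => hA (by rw [h])
    exact thaloid_eq_sphere hc
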